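/- For the cooperative Parrondo Markov chain on {0,1}^N with p_0 = 1, p_3 = 0, 0 < p_1 + p_2 < 2, and N odd, the set of 2N states in which 0s and 1s alternate except for exactly one pair of adjacent equal symbols (a pair of adjacent 0s or a pair of adjacent 1s) is closed, irreducible, and aperiodic, and all states outside this set are transient. -/

import Mathlib

/-
Call an edge `{i, i + 1}` a defect when its ends carry equal symbols. Flipping site `i` toggles
exactly the edges `{i - 1, i}` and `{i, i + 1}`, and since `p₀ = 1`, `p₃ = 0` a site lying on no
defect never flips. Around a circle of odd length the number of defects is odd, so it is at least
one, and a state with a single defect can only move it to a neighbouring edge: the defect set is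
closed. As `0 < p₁ + p₂ < 2`, either `p₁ > 0, p₂ < 1` or `p₁ < 1, p₂ > 0`, and then every defect
can be pushed one edge to the right, resp. to the left, with positive probability. Pushing a defect
until it meets the next one annihilates both, so every state reaches the defect set. Inside it,
each push also flips the symbol next to the defect; after `N` pushes the defect is back with the
opposite symbol, so all `2N` defect states are reached within `2N` steps. A site two steps away
from the defect never flips, which gives positive holding probabilities and hence aperiodicity.
-/

namespace Stmt3

variable {N : ℕ}

def flip (x : Fin N → Bool) (i : Fin N) : Fin N → Bool := Function.update x i (!x i)

def mIdx [NeZero N] (x : Fin N → Bool) (i : Fin N) : Fin 4 :=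
  (if x (i - 1) then 2 else 0) + (if x (i + 1) then 1 else 0)

noncomputable def rate [NeZero N] (p : Fin 4 → ℝ) (x : Fin N → Bool) (i : Fin N) : ℝ :=
  if x i then 1 - p (mIdx x i) else p (mIdx x i)

noncomputable def Pmat [NeZero N] (p : Fin 4 → ℝ) : Matrix (Fin N → Bool) (Fin N → Bool) ℝ :=
  fun x y => (∑ i : Fin N, if y = flip x i then rate p x i else 0) / N
    + (if y = x then (∑ i : Fin N, (1 - rate p x i)) / N else 0)

def Accessible [NeZero N] (p : Fin 4 → ℝ) (x y : Fin N → Bool) : Prop :=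
  ∃ n : ℕ, 0 < (Pmat p ^ n) x y

def Transient [NeZero N] (p : Fin 4 → ℝ) (x : Fin N → Bool) : Prop :=
  ∃ y : Fin N → Bool, Accessible p x y ∧ ¬ Accessible p y x

/-- The set of `2N` "defect" states: `0`s and `1`s alternate around the circle except
for exactly one pair of adjacent equal symbols. -/
def DefectSet (N : ℕ) [NeZero N] : Set (Fin N → Bool) :=
  {x | (Finset.univ.filter fun i : Fin N => x i = x (i + 1)).card = 1}

section NonnegMatrix

variable {ι R : Type*} [Fintype ι] [DecidableEq ι] {A : Matrix ι ι R}

theorem pow_apply_eq_zero_of_closed [Semiring R] {S : Set ι}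
    (hS : ∀ i ∈ S, ∀ j ∉ S, A i j = 0) (n : ℕ) : ∀ i ∈ S, ∀ j ∉ S, (A ^ n) i j = 0 := by
  induction n with
  | zero =>
    intro i hi j hj
    exact Matrix.one_apply_ne (by rintro rfl; exact hj hi)
  | succ n ih =>
    intro i hi j hj
    rw [pow_succ, Matrix.mul_apply]
    refine Finset.sum_eq_zero fun l _ => ?_
    by_cases hl : l ∈ S
    · rw [hS l hl j hj, mul_zero]
    · rw [ih i hi l hl, zero_mul]

variable [Ring R] [LinearOrder R] [IsStrictOrderedRing R]

theorem pow_apply_mul_pow_apply_le (hA : ∀ i j, 0 ≤ A i j) (m n : ℕ) (i j k : ι) :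
    (A ^ m) i j * (A ^ n) j k ≤ (A ^ (m + n)) i k := by
  rw [pow_add, Matrix.mul_apply]
  exact Finset.single_le_sum (f := fun l => (A ^ m) i l * (A ^ n) l k)
    (fun l _ => mul_nonneg (Matrix.pow_apply_nonneg hA m i l) (Matrix.pow_apply_nonneg hA n l k))
    (Finset.mem_univ j)

theorem pow_add_apply_pos (hA : ∀ i j, 0 ≤ A i j) {m n : ℕ} {i j k : ι}
    (hij : 0 < (A ^ m) i j) (hjk : 0 < (A ^ n) j k) : 0 < (A ^ (m + n)) i k :=
  (mul_pos hij hjk).trans_le (pow_apply_mul_pow_apply_le hA m n i j k)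

theorem pow_apply_self_pos (hA : ∀ i j, 0 ≤ A i j) {i : ι} (hi : 0 < A i i) (n : ℕ) :
    0 < (A ^ n) i i := by
  induction n with
  | zero => simp
  | succ n ih => exact pow_add_apply_pos hA ih (by rwa [pow_one])

theorem pow_apply_pos_of_le (hA : ∀ i j, 0 ≤ A i j) {i j : ι} (hi : 0 < A i i) {t m : ℕ}
    (ht : 0 < (A ^ t) i j) (htm : t ≤ m) : 0 < (A ^ m) i j := by
  obtain ⟨k, rfl⟩ := Nat.exists_eq_add_of_le' htm
  exact pow_add_apply_pos hA (pow_apply_self_pos hA hi k) ht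

end NonnegMatrix

open Finset Fin.NatCast Fin.CommRing
open scoped symmDiff

theorem singleton_symmDiff_pair {α : Type*} [DecidableEq α] {a b : α} (h : a ≠ b) :
    ({a} : Finset α) ∆ {a, b} = {b} := by
  ext x
  simp only [mem_symmDiff, mem_insert, mem_singleton]
  grind

theorem card_symmDiff_lt_of_subset {α : Type*} [DecidableEq α] {s t : Finset α} (h : t ⊆ s)
    (ht : t.Nonempty) : #(s ∆ t) < #s := by
  rw [symmDiff_of_ge h]
  exact card_lt_card (sdiff_ssubset h ht)

theorem card_symmDiff_pair_of_mem_of_notMem {α : Type*} [DecidableEq α] {s : Finset α} {a b : α}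
    (ha : a ∈ s) (hb : b ∉ s) : #(s ∆ {a, b}) = #s := by
  have hs : s ∆ {a, b} = insert b (s.erase a) := by
    ext x
    simp only [mem_symmDiff, mem_insert, mem_singleton, mem_erase]
    grind
  rw [hs, card_insert_of_notMem (by simp [hb]), card_erase_add_one ha]

theorem flip_ne (x : Fin N → Bool) (i : Fin N) : flip x i ≠ x := fun h => by
  simpa [flip] using congrFun h i

theorem flip_injective (x : Fin N → Bool) : Function.Injective (flip x) := by
  intro i i' h
  by_contra hne
  simpa [flip, Function.update_of_ne hne] using congrFun h i

section Configurations

variable [NeZero N]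

theorem fin_one_ne_zero (hN : 1 < N) : (1 : Fin N) ≠ 0 := by
  simp [Fin.ext_iff, Nat.mod_eq_of_lt hN]

theorem fin_two_ne_zero (hN : 2 < N) : (2 : Fin N) ≠ 0 := by
  simp [Fin.ext_iff, Nat.mod_eq_of_lt hN]

theorem forall_of_add_one_of_ne (j : Fin N) {P : Fin N → Prop} (hP : P (j + 1))
    (hsucc : ∀ k ≠ j, P k → P (k + 1)) (k : Fin N) : P k := by
  have key : ∀ t < N, P (j + 1 + t) := by
    intro t
    induction t with
    | zero => intro _; simpa using hP
    | succ t ih =>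
      intro ht
      have hne : j + 1 + t ≠ j := by
        intro h
        have h0 : ((t + 1 : ℕ) : Fin N) = 0 := by push_cast; linear_combination h
        have := congrArg Fin.val h0
        rw [Fin.val_cast_of_lt ht] at this
        simp at this
      simpa [add_assoc] using hsucc _ hne (ih (by omega))
  simpa using key (k - (j + 1)).val (Fin.is_lt _)

def defects (x : Fin N → Bool) : Finset (Fin N) := {i | x i = x (i + 1)}

variable {x : Fin N → Bool} {i j : Fin N}

theorem mem_defects : i ∈ defects x ↔ x i = x (i + 1) := by
  simp [defects]

theorem mem_defectSet_iff : x ∈ DefectSet N ↔ #(defects x) = 1 := Iff.rfl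

theorem defects_flip (hN : 1 < N) (x : Fin N → Bool) (i : Fin N) :
    defects (flip x i) = defects x ∆ {i - 1, i} := by
  have h1 : i - 1 ≠ i := fun h => fin_one_ne_zero hN (by linear_combination -h)
  have h2 : i + 1 ≠ i := fun h => fin_one_ne_zero hN (by linear_combination h)
  ext e
  simp only [mem_defects, mem_symmDiff, mem_insert, mem_singleton, flip, Function.update_apply]
  rcases eq_or_ne e i with rfl | he
  · simp [h2, Bool.eq_not_iff]
  rcases eq_or_ne e (i - 1) with rfl | he'
  · simp [h1, Bool.eq_not_iff]
  have he'' : e + 1 ≠ i := fun h => he' (by linear_combination h)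
  simp [he, he', he'']

theorem even_card_filter_ne (x : Fin N → Bool) : Even #{i | x i ≠ x (i + 1)} := by
  rw [← ZMod.natCast_eq_zero_iff_even, natCast_card_filter]
  let f : Fin N → ZMod 2 := fun i => if x i then 1 else 0
  have hterm : ∀ i, (if x i ≠ x (i + 1) then (1 : ZMod 2) else 0) = f i + f (i + 1) := by
    intro i
    cases hi : x i <;> cases hi' : x (i + 1) <;> simp [f, hi, hi', CharTwo.add_self_eq_zero]
  rw [sum_congr rfl fun i _ => hterm i, sum_add_distrib,
    Fintype.sum_equiv (Equiv.addRight 1) (fun i => f (i + 1)) f fun _ => rfl,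
    CharTwo.add_self_eq_zero]

theorem odd_card_defects (hN : Odd N) (x : Fin N → Bool) : Odd #(defects x) := by
  have hsplit : #(defects x) + #{i | x i ≠ x (i + 1)} = N := by
    rw [defects, card_filter_add_card_filter_not, card_univ, Fintype.card_fin]
  obtain ⟨k, hk⟩ := even_card_filter_ne x
  obtain ⟨m, hm⟩ := hN
  exact ⟨m - k, by omega⟩

theorem apply_add_one_eq_not (h : i ∉ defects x) : x (i + 1) = !x i := by
  rw [Bool.eq_not_iff, ne_comm]
  exact mem_defects.not.mp h

theorem eq_of_defects_eq_singleton {x y : Fin N → Bool} (hx : defects x = {j})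
    (hy : defects y = {j}) (hxy : x (j + 1) = y (j + 1)) : x = y := by
  have hnext : ∀ {z : Fin N → Bool}, defects z = {j} → ∀ k ≠ j, z (k + 1) = !z k :=
    fun hz k hk => apply_add_one_eq_not (by simpa [hz] using hk)
  funext k
  refine forall_of_add_one_of_ne (P := fun k => x k = y k) j hxy (fun k hk hxyk => ?_) k
  rw [hnext hx k hk, hnext hy k hk, hxyk]

def defectConfig (j : Fin N) (b : Bool) : Fin N → Bool :=
  fun k => xor b (k - (j + 1)).val.bodd

theorem defectConfig_apply_add_one (j : Fin N) (b : Bool) : defectConfig j b (j + 1) = b := by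
  simp [defectConfig]

theorem bodd_val_add_one_eq_iff (hN : Odd N) (a : Fin N) :
    (a + 1).val.bodd = a.val.bodd ↔ a + 1 = 0 := by
  rcases (Nat.succ_le_of_lt a.isLt).lt_or_eq with h | h
  · have hval : (a + 1).val = a.val + 1 := Fin.val_add_one_of_lt' h
    have hne : a + 1 ≠ 0 := fun h0 => by
      have := congrArg Fin.val h0
      rw [hval] at this
      simp at this
    simp [hval, Nat.bodd_succ, hne]
  · have h0 : a + 1 = 0 := Fin.ext (by
      rw [Fin.val_add, Fin.val_one', Nat.add_mod_mod, show a.val + 1 = N from h]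
      simp)
    obtain ⟨m, hm⟩ := hN
    have ha : a.val = 2 * m := by omega
    simp [h0, ha, Nat.bodd_mul]

theorem defects_defectConfig (hN : Odd N) (j : Fin N) (b : Bool) :
    defects (defectConfig j b) = {j} := by
  ext e
  rw [mem_defects, mem_singleton, defectConfig, defectConfig, Bool.xor_right_inj,
    show e + 1 - (j + 1) = e - (j + 1) + 1 by ring, eq_comm, bodd_val_add_one_eq_iff hN,
    show e - (j + 1) + 1 = e - j by ring, sub_eq_zero]

theorem eq_defectConfig (hN : Odd N) (hx : defects x = {j}) : x = defectConfig j (x (j + 1)) :=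
  eq_of_defects_eq_singleton hx (defects_defectConfig hN j _) (defectConfig_apply_add_one j _).symm

theorem defectConfig_injective (hN : Odd N) :
    Function.Injective fun q : Fin N × Bool => defectConfig q.1 q.2 := by
  rintro ⟨j, b⟩ ⟨j', b'⟩ h
  have hj : j = j' := by
    simpa [defects_defectConfig hN] using congrArg defects h
  subst hj
  have hb := congrFun h (j + 1)
  simp only [defectConfig_apply_add_one] at hb
  rw [hb]

theorem defectSet_eq_range (hN : Odd N) :
    DefectSet N = Set.range fun q : Fin N × Bool => defectConfig q.1 q.2 := by
  ext x
  constructor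
  · intro hx
    obtain ⟨j, hj⟩ := card_eq_one.mp (mem_defectSet_iff.mp hx)
    exact ⟨(j, x (j + 1)), (eq_defectConfig hN hj).symm⟩
  · rintro ⟨⟨j, b⟩, rfl⟩
    rw [mem_defectSet_iff, defects_defectConfig hN, card_singleton]

theorem card_defectSet (hN : Odd N) : Nat.card (DefectSet N) = 2 * N := by
  rw [defectSet_eq_range hN, Nat.card_range_of_injective (defectConfig_injective hN),
    Nat.card_eq_fintype_card, Fintype.card_prod, Fintype.card_fin, Fintype.card_bool, mul_comm]

theorem flip_defectConfig_add_one (hN : Odd N) (hN1 : 1 < N) (j : Fin N) (b : Bool) :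
    flip (defectConfig j b) (j + 1) = defectConfig (j + 1) (!b) := by
  have hne : j + 1 ≠ j := fun h => fin_one_ne_zero hN1 (by linear_combination h)
  apply eq_of_defects_eq_singleton (j := j + 1)
  · rw [defects_flip hN1, defects_defectConfig hN, add_sub_cancel_right,
      singleton_symmDiff_pair hne.symm]
  · exact defects_defectConfig hN _ _
  · have hj1 : j + 1 ∉ defects (defectConfig j b) := by simpa [defects_defectConfig hN] using hne
    rw [defectConfig_apply_add_one, flip, Function.update_of_ne (by simpa using hne.symm),
      apply_add_one_eq_not hj1, defectConfig_apply_add_one]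

theorem flip_defectConfig_self (hN : Odd N) (hN1 : 1 < N) (j : Fin N) (b : Bool) :
    flip (defectConfig j b) j = defectConfig (j - 1) (!b) := by
  have hne : j ≠ j - 1 := fun h => fin_one_ne_zero hN1 (by linear_combination h)
  apply eq_of_defects_eq_singleton (j := j - 1)
  · rw [defects_flip hN1, defects_defectConfig hN, pair_comm, singleton_symmDiff_pair hne]
  · exact defects_defectConfig hN _ _
  · have hj : j ∈ defects (defectConfig j b) := by simp [defects_defectConfig hN]
    rw [defectConfig_apply_add_one, sub_add_cancel, flip, Function.update_self, mem_defects.mp hj,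
      defectConfig_apply_add_one]

end Configurations

section Chain

variable [NeZero N] {p : Fin 4 → ℝ} {x y : Fin N → Bool} {i j : Fin N}

theorem rate_nonneg (hp : ∀ m, p m ∈ Set.Icc (0 : ℝ) 1) (x : Fin N → Bool) (i : Fin N) :
    0 ≤ rate p x i := by
  obtain ⟨h0, h1⟩ := hp (mIdx x i)
  unfold rate
  split <;> linarith

theorem rate_le_one (hp : ∀ m, p m ∈ Set.Icc (0 : ℝ) 1) (x : Fin N → Bool) (i : Fin N) :
    rate p x i ≤ 1 := by
  obtain ⟨h0, h1⟩ := hp (mIdx x i)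
  unfold rate
  split <;> linarith

theorem rate_eq_zero_of_notMem_defects (hp0 : p 0 = 1) (hp3 : p 3 = 0) (h1 : i - 1 ∉ defects x)
    (h2 : i ∉ defects x) : rate p x i = 0 := by
  rw [mem_defects, sub_add_cancel] at h1
  rw [mem_defects] at h2
  cases hl : x (i - 1) <;> cases hc : x i <;> cases hr : x (i + 1) <;>
    simp_all [rate, mIdx]

theorem rate_add_one_pos_of_mem_defects (hp0 : p 0 = 1) (hp3 : p 3 = 0) (h1 : 0 < p 1)
    (h2 : p 2 < 1) (hj : j ∈ defects x) : 0 < rate p x (j + 1) := by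
  rw [mem_defects] at hj
  cases hc : x (j + 1) <;> cases hr : x (j + 1 + 1) <;>
    simp_all [rate, mIdx]

theorem rate_pos_of_mem_defects (hp0 : p 0 = 1) (hp3 : p 3 = 0) (h1 : p 1 < 1) (h2 : 0 < p 2)
    (hj : j ∈ defects x) : 0 < rate p x j := by
  rw [mem_defects] at hj
  cases hl : x (j - 1) <;> cases hc : x j <;>
    simp_all [rate, mIdx]

theorem Pmat_flip (p : Fin 4 → ℝ) (x : Fin N → Bool) (i : Fin N) :
    Pmat p x (flip x i) = rate p x i / N := by
  rw [Pmat, if_neg (flip_ne x i), add_zero, sum_eq_single i (fun k _ hk => ?_) (by simp),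
    if_pos rfl]
  exact if_neg fun h => hk (flip_injective x h).symm

theorem Pmat_self (p : Fin 4 → ℝ) (x : Fin N → Bool) :
    Pmat p x x = (∑ i, (1 - rate p x i)) / N := by
  rw [Pmat, if_pos rfl, sum_eq_zero fun i _ => if_neg fun h => flip_ne x i h.symm, zero_div,
    zero_add]

theorem Pmat_nonneg (hp : ∀ m, p m ∈ Set.Icc (0 : ℝ) 1) (x y : Fin N → Bool) :
    0 ≤ Pmat p x y := by
  unfold Pmat
  refine add_nonneg (div_nonneg (sum_nonneg fun i _ => ?_) N.cast_nonneg) ?_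
  · split
    · exact rate_nonneg hp x i
    · rfl
  · split
    · exact div_nonneg (sum_nonneg fun i _ => sub_nonneg.mpr (rate_le_one hp x i)) N.cast_nonneg
    · rfl

theorem eq_or_eq_flip_of_Pmat_ne_zero (h : Pmat p x y ≠ 0) :
    y = x ∨ ∃ i, rate p x i ≠ 0 ∧ y = flip x i := by
  by_contra! hcon
  apply h
  rw [Pmat, if_neg hcon.1, add_zero, sum_eq_zero fun i _ => ?_, zero_div]
  split_ifs with hy
  · by_contra hr
    exact hcon.2 i hr hy
  · rfl

theorem Pmat_flip_pos (h : 0 < rate p x i) : 0 < Pmat p x (flip x i) := by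
  rw [Pmat_flip]
  exact div_pos h (Nat.cast_pos.mpr (NeZero.pos N))

theorem accessible_refl (p : Fin 4 → ℝ) (x : Fin N → Bool) : Accessible p x x :=
  ⟨0, by simp⟩

theorem accessible_of_Pmat_pos (h : 0 < Pmat p x y) : Accessible p x y :=
  ⟨1, by rwa [pow_one]⟩

theorem Accessible.trans {z : Fin N → Bool} (hp : ∀ m, p m ∈ Set.Icc (0 : ℝ) 1)
    (hxy : Accessible p x y) (hyz : Accessible p y z) : Accessible p x z :=
  let ⟨m, hm⟩ := hxy
  let ⟨n, hn⟩ := hyz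
  ⟨m + n, pow_add_apply_pos (Pmat_nonneg hp) hm hn⟩

theorem flip_mem_defectSet (hN : 1 < N) (hp0 : p 0 = 1) (hp3 : p 3 = 0)
    (hx : x ∈ DefectSet N) (hr : rate p x i ≠ 0) : flip x i ∈ DefectSet N := by
  obtain ⟨j, hj⟩ := card_eq_one.mp (mem_defectSet_iff.mp hx)
  have hne : i - 1 ≠ i := fun h => fin_one_ne_zero hN (by linear_combination -h)
  have hji : j = i - 1 ∨ j = i := by
    by_contra! h
    exact hr (rate_eq_zero_of_notMem_defects hp0 hp3 (by simpa [hj] using h.1.symm)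
      (by simpa [hj] using h.2.symm))
  rw [mem_defectSet_iff, defects_flip hN, hj]
  rcases hji with rfl | rfl
  · rw [singleton_symmDiff_pair hne, card_singleton]
  · rw [pair_comm, singleton_symmDiff_pair hne.symm, card_singleton]

theorem Pmat_eq_zero_of_mem_defectSet (hN : 1 < N) (hp0 : p 0 = 1) (hp3 : p 3 = 0) :
    ∀ x ∈ DefectSet N, ∀ y ∉ DefectSet N, Pmat p x y = 0 := by
  intro x hx y hy
  by_contra h
  rcases eq_or_eq_flip_of_Pmat_ne_zero h with rfl | ⟨i, hr, rfl⟩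
  · exact hy hx
  · exact hy (flip_mem_defectSet hN hp0 hp3 hx hr)

theorem Pmat_self_pos_of_mem_defectSet (hN : 2 < N) (hp : ∀ m, p m ∈ Set.Icc (0 : ℝ) 1)
    (hp0 : p 0 = 1) (hp3 : p 3 = 0) (hx : x ∈ DefectSet N) : 0 < Pmat p x x := by
  obtain ⟨j, hj⟩ := card_eq_one.mp (mem_defectSet_iff.mp hx)
  have hrate : rate p x (j + 2) = 0 := by
    refine rate_eq_zero_of_notMem_defects hp0 hp3 ?_ ?_ <;> rw [hj, mem_singleton] <;> intro h
    · exact fin_one_ne_zero (N := N) (by omega) (by linear_combination h)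
    · exact fin_two_ne_zero hN (by linear_combination h)
  rw [Pmat_self]
  refine div_pos ?_ (Nat.cast_pos.mpr (NeZero.pos N))
  calc (0 : ℝ) < 1 - rate p x (j + 2) := by rw [hrate]; norm_num
    _ ≤ ∑ i, (1 - rate p x i) :=
      single_le_sum (f := fun i => 1 - rate p x i)
        (fun i _ => sub_nonneg.mpr (rate_le_one hp x i)) (mem_univ _)

structure DefectDrift (p : Fin 4 → ℝ) (σ : Fin N) : Prop where
  exists_step : ∀ x j, j ∈ defects x → ∃ y, 0 < Pmat p x y ∧ defects y = defects x ∆ {j, j + σ}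
  step_defectConfig : ∀ j b, 0 < Pmat p (defectConfig j b) (defectConfig (j + σ) (!b))

theorem defectDrift_one (hN : Odd N) (hN1 : 1 < N) (hp0 : p 0 = 1) (hp3 : p 3 = 0)
    (h1 : 0 < p 1) (h2 : p 2 < 1) : DefectDrift p (1 : Fin N) where
  exists_step x j hj :=
    ⟨flip x (j + 1), Pmat_flip_pos (rate_add_one_pos_of_mem_defects hp0 hp3 h1 h2 hj),
    by rw [defects_flip hN1, add_sub_cancel_right]⟩
  step_defectConfig j b := by
    rw [← flip_defectConfig_add_one hN hN1]
    exact Pmat_flip_pos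
      (rate_add_one_pos_of_mem_defects hp0 hp3 h1 h2 (by simp [defects_defectConfig hN]))

theorem defectDrift_neg_one (hN : Odd N) (hN1 : 1 < N) (hp0 : p 0 = 1) (hp3 : p 3 = 0)
    (h1 : p 1 < 1) (h2 : 0 < p 2) : DefectDrift p (-1 : Fin N) where
  exists_step x j hj := ⟨flip x j, Pmat_flip_pos (rate_pos_of_mem_defects hp0 hp3 h1 h2 hj),
    by rw [defects_flip hN1, pair_comm, sub_eq_add_neg]⟩
  step_defectConfig j b := by
    rw [← sub_eq_add_neg, ← flip_defectConfig_self hN hN1]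
    exact Pmat_flip_pos (rate_pos_of_mem_defects hp0 hp3 h1 h2 (by simp [defects_defectConfig hN]))

theorem exists_defectDrift (hN : Odd N) (hN1 : 1 < N) (hp : ∀ m, p m ∈ Set.Icc (0 : ℝ) 1)
    (hp0 : p 0 = 1) (hp3 : p 3 = 0) (hsum_pos : 0 < p 1 + p 2) (hsum_lt : p 1 + p 2 < 2) :
    ∃ σ : Fin N, σ * σ = 1 ∧ DefectDrift p σ := by
  by_cases h : 0 < p 1 ∧ p 2 < 1
  · exact ⟨1, mul_one 1, defectDrift_one hN hN1 hp0 hp3 h.1 h.2⟩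
  · have h' : p 1 < 1 ∧ 0 < p 2 := by
      obtain ⟨h10, h11⟩ := hp 1
      obtain ⟨h20, h21⟩ := hp 2
      rcases not_and_or.mp h with h | h <;> rw [not_lt] at h <;> constructor <;> linarith
    exact ⟨-1, by ring, defectDrift_neg_one hN hN1 hp0 hp3 h'.1 h'.2⟩

variable {σ : Fin N}

theorem DefectDrift.pow_apply_defectConfig_pos (hp : ∀ m, p m ∈ Set.Icc (0 : ℝ) 1)
    (hd : DefectDrift p σ) (j : Fin N) (b : Bool) (t : ℕ) :
    0 < (Pmat p ^ t) (defectConfig j b) (defectConfig (j + σ * t) (xor b t.bodd)) := by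
  induction t with
  | zero => simp
  | succ t ih =>
    have hσt : j + σ * ((t + 1 : ℕ) : Fin N) = j + σ * t + σ := by push_cast; ring
    rw [hσt, Nat.bodd_succ, Bool.xor_not]
    exact pow_add_apply_pos (Pmat_nonneg hp) ih (by rw [pow_one]; exact hd.step_defectConfig _ _)

theorem DefectDrift.exists_pow_pos (hN : Odd N) (hp : ∀ m, p m ∈ Set.Icc (0 : ℝ) 1)
    (hσ : σ * σ = 1) (hd : DefectDrift p σ) (j j' : Fin N) (b b' : Bool) :
    ∃ t < 2 * N, 0 < (Pmat p ^ t) (defectConfig j b) (defectConfig j' b') := by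
  set d := (σ * (j' - j)).val with hd_def
  have hdN : d < N := Fin.is_lt _
  have hj' : j + σ * (d : Fin N) = j' := by
    rw [hd_def, Fin.cast_val_eq_self, ← mul_assoc, hσ]
    ring
  by_cases hb : xor b d.bodd = b'
  · refine ⟨d, by omega, ?_⟩
    simpa only [hj', hb] using hd.pow_apply_defectConfig_pos hp j b d
  · -- `N` more steps bring the defect back to `j'` with the opposite symbol, as `N` is odd
    have hNb : N.bodd = true := by
      obtain ⟨m, hm⟩ := hN
      simp [hm, Nat.bodd_add, Nat.bodd_mul, Nat.bodd_two]
    refine ⟨d + N, by omega, ?_⟩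
    have hwalk := hd.pow_apply_defectConfig_pos hp j b (d + N)
    rwa [Nat.cast_add, Fin.natCast_self, add_zero, hj', Nat.bodd_add, hNb, Bool.xor_true,
      Bool.xor_not, Bool.not_eq.mpr hb] at hwalk

theorem DefectDrift.exists_accessible_card_lt (hp : ∀ m, p m ∈ Set.Icc (0 : ℝ) 1)
    (hd : DefectDrift p σ) {d : ℕ} {x : Fin N → Bool} {j : Fin N} (hj : j ∈ defects x)
    (hk : j + σ * ((d + 1 : ℕ) : Fin N) ∈ defects x) (hkj : j + σ * ((d + 1 : ℕ) : Fin N) ≠ j) :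
    ∃ y, Accessible p x y ∧ #(defects y) < #(defects x) := by
  induction d generalizing x j with
  | zero =>
    obtain ⟨y, hxy, hy⟩ := hd.exists_step x j hj
    refine ⟨y, accessible_of_Pmat_pos hxy, ?_⟩
    rw [hy]
    exact card_symmDiff_lt_of_subset (insert_subset hj (by simpa using hk)) (insert_nonempty _ _)
  | succ d ih =>
    obtain ⟨y, hxy, hy⟩ := hd.exists_step x j hj
    by_cases hjσ : j + σ ∈ defects x
    · refine ⟨y, accessible_of_Pmat_pos hxy, ?_⟩
      rw [hy]
      exact card_symmDiff_lt_of_subset (insert_subset hj (singleton_subset_iff.mpr hjσ))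
        (insert_nonempty _ _)
    -- the defect has moved from `j` to `j + σ`, one edge closer to the other one
    have hk' : j + σ * ((d + 1 + 1 : ℕ) : Fin N) = j + σ + σ * ((d + 1 : ℕ) : Fin N) := by
      push_cast
      ring
    have hkσ : j + σ * ((d + 1 + 1 : ℕ) : Fin N) ≠ j + σ := fun h => hjσ (h ▸ hk)
    have hjσ_mem : j + σ ∈ defects y := by simp [hy, mem_symmDiff, hjσ]
    have hk_mem : j + σ + σ * ((d + 1 : ℕ) : Fin N) ∈ defects y := by
      rw [← hk', hy, mem_symmDiff, mem_insert, mem_singleton, not_or]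
      exact Or.inl ⟨hk, hkj, hkσ⟩
    obtain ⟨z, hyz, hz⟩ := ih hjσ_mem hk_mem (by rw [← hk']; exact hkσ)
    refine ⟨z, (accessible_of_Pmat_pos hxy).trans hp hyz, ?_⟩
    rwa [hy, card_symmDiff_pair_of_mem_of_notMem hj hjσ] at hz

theorem DefectDrift.exists_accessible_mem_defectSet (hN : Odd N)
    (hp : ∀ m, p m ∈ Set.Icc (0 : ℝ) 1) (hσ : σ * σ = 1) (hd : DefectDrift p σ)
    (x : Fin N → Bool) : ∃ y ∈ DefectSet N, Accessible p x y := by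
  suffices ∀ n, ∀ x : Fin N → Bool, #(defects x) = n → ∃ y ∈ DefectSet N, Accessible p x y from
    this _ x rfl
  intro n
  induction n using Nat.strong_induction_on with
  | _ n ih =>
  intro x hn
  obtain ⟨m, hm⟩ := odd_card_defects hN x
  rcases eq_or_ne n 1 with rfl | hn1
  · exact ⟨x, hn, accessible_refl p x⟩
  obtain ⟨j, hj, j', hj', hne⟩ := one_lt_card.mp (show 1 < #(defects x) by omega)
  have hval : σ * (j' - j) ≠ 0 := fun h =>
    hne.symm (sub_eq_zero.mp (by linear_combination σ * h - (j' - j) * hσ))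
  obtain ⟨d, hd1⟩ := Nat.exists_eq_add_one_of_ne_zero (Fin.val_ne_zero_iff.mpr hval)
  have hjj' : j + σ * ((d + 1 : ℕ) : Fin N) = j' := by
    rw [← hd1, Fin.cast_val_eq_self, ← mul_assoc, hσ]
    ring
  obtain ⟨y, hxy, hy⟩ := hd.exists_accessible_card_lt hp hj (hjj' ▸ hj') (hjj' ▸ hne.symm)
  obtain ⟨z, hz, hyz⟩ := ih _ (hn ▸ hy) y rfl
  exact ⟨z, hz, hxy.trans hp hyz⟩

end Chain

/-- for `p_0 = 1`, `p_3 = 0`, `0 < p_1 + p_2 < 2` and `N` odd, the set of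
`2N` defect states is closed, irreducible and aperiodic, and all other states are
transient. (Aperiodicity of the closed irreducible finite class is expressed in the
equivalent primitivity form: all sufficiently high powers of `P` are positive on it.) -/
theorem stmt_3 [NeZero N] (hN : 3 ≤ N) (hNodd : Odd N)
    (p : Fin 4 → ℝ) (hp : ∀ m, p m ∈ Set.Icc (0:ℝ) 1)
    (hp0 : p 0 = 1) (hp3 : p 3 = 0)
    (hsum_pos : 0 < p 1 + p 2) (hsum_lt : p 1 + p 2 < 2) :
    -- the defect set has 2N elements
    Nat.card (DefectSet N) = 2 * N ∧
    -- closed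
    (∀ x ∈ DefectSet N, ∀ y ∉ DefectSet N, Pmat p x y = 0) ∧
    -- irreducible
    (∀ x ∈ DefectSet N, ∀ y ∈ DefectSet N, Accessible p x y) ∧
    -- aperiodic (primitivity on the class)
    (∃ n : ℕ, ∀ m ≥ n, ∀ x ∈ DefectSet N, ∀ y ∈ DefectSet N, 0 < (Pmat p ^ m) x y) ∧
    -- all other states are transient
    (∀ x ∉ DefectSet N, Transient p x) := by
  have hN1 : 1 < N := by omega
  obtain ⟨σ, hσ, hd⟩ := exists_defectDrift hNodd hN1 hp hp0 hp3 hsum_pos hsum_lt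
  have hclosed := Pmat_eq_zero_of_mem_defectSet (p := p) hN1 hp0 hp3
  have hreach : ∀ x ∈ DefectSet N, ∀ y ∈ DefectSet N, ∃ t < 2 * N, 0 < (Pmat p ^ t) x y := by
    rw [defectSet_eq_range hNodd]
    rintro _ ⟨⟨j, b⟩, rfl⟩ _ ⟨⟨j', b'⟩, rfl⟩
    exact hd.exists_pow_pos hNodd hp hσ j j' b b'
  refine ⟨card_defectSet hNodd, hclosed, fun x hx y hy => ?_,
    ⟨2 * N, fun m hm x hx y hy => ?_⟩, fun x hx => ?_⟩
  · obtain ⟨t, -, ht⟩ := hreach x hx y hy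
    exact ⟨t, ht⟩
  · obtain ⟨t, ht, hpos⟩ := hreach x hx y hy
    exact pow_apply_pos_of_le (Pmat_nonneg hp) (Pmat_self_pos_of_mem_defectSet hN hp hp0 hp3 hx)
      hpos (by omega)
  · obtain ⟨y, hy, hxy⟩ := hd.exists_accessible_mem_defectSet hNodd hp hσ x
    exact ⟨y, hxy, fun ⟨n, hn⟩ => hn.ne' (pow_apply_eq_zero_of_closed hclosed n y hy x hx)⟩

end Stmt3
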